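/- arXiv:2605.16836 — 2 statements merged into one kernel-verified Lean document; each statement's English description precedes it below -/
import Mathlib

section
/- Let n, m ∈ ℕ, λ̄ > 0, and 0 < c₀ ≤ C₀ with C₀·λ̄ ≤ 1/2. Let Λ = (λ_{ij}) and Λ' = (λ'_{ij}) be matrices in ℝ^{n×m} all of whose entries lie in [c₀λ̄, C₀λ̄], and set p_{ij} = 1 − exp(−λ_{ij}) and p'_{ij} = 1 − exp(−λ'_{ij}). Then the Bhattacharyya coefficient of the corresponding product Bernoulli measures satisfies ∏_{i,j} ( √(p_{ij} p'_{ij}) + √((1 − p_{ij})(1 − p'_{ij})) ) ≤ exp( −(e^{−1} / (8·C₀·λ̄)) · Σ_{i,j} (λ_{ij} − λ'_{ij})² ). -/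
/-!
Writing `p = 1 - e^{-λ}`, each factor is the Bhattacharyya coefficient `1 - H²` of two Bernoulli
laws, and `1 - H² ≤ exp (-H²)` with `2 H² ≥ (√p - √p')²`. Since `√p + √p' ≤ 2 √(C₀ λ̄)`, this is at
least `(p - p')² / (4 C₀ λ̄)`, and on `[0, 1/2]` the map `λ ↦ e^{-λ}` has slope at least `e^{-1/2}`
in absolute value, so `(p - p')² ≥ e^{-1} (λ - λ')²`. Multiplying over the coordinates gives the bound.
-/

open Real Finset

noncomputable def bernoulliBhattacharyya (p p' : ℝ) : ℝ :=
  √(p * p') + √((1 - p) * (1 - p'))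

lemma bernoulliBhattacharyya_nonneg (p p' : ℝ) : 0 ≤ bernoulliBhattacharyya p p' := by
  unfold bernoulliBhattacharyya; positivity

lemma bernoulliBhattacharyya_eq_one_sub {p p' : ℝ} (hp₀ : 0 ≤ p) (hp₁ : p ≤ 1)
    (hp'₀ : 0 ≤ p') (hp'₁ : p' ≤ 1) :
    bernoulliBhattacharyya p p' = 1 - ((√p - √p') ^ 2 + (√(1 - p) - √(1 - p')) ^ 2) / 2 := by
  have hq₀ : 0 ≤ 1 - p := by linarith
  have hq'₀ : 0 ≤ 1 - p' := by linarith
  rw [bernoulliBhattacharyya, sqrt_mul hp₀, sqrt_mul hq₀]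
  nlinarith [sq_sqrt hp₀, sq_sqrt hp'₀, sq_sqrt hq₀, sq_sqrt hq'₀]

lemma bernoulliBhattacharyya_le_exp {p p' : ℝ} (hp₀ : 0 ≤ p) (hp₁ : p ≤ 1)
    (hp'₀ : 0 ≤ p') (hp'₁ : p' ≤ 1) :
    bernoulliBhattacharyya p p' ≤ exp (-((√p - √p') ^ 2 / 2)) := by
  set H := ((√p - √p') ^ 2 + (√(1 - p) - √(1 - p')) ^ 2) / 2
  have hH : (√p - √p') ^ 2 / 2 ≤ H := by
    have := sq_nonneg (√(1 - p) - √(1 - p')); simp only [H]; linarith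
  calc bernoulliBhattacharyya p p' = 1 - H := bernoulliBhattacharyya_eq_one_sub hp₀ hp₁ hp'₀ hp'₁
    _ ≤ exp (-H) := by linarith [add_one_le_exp (-H)]
    _ ≤ exp (-((√p - √p') ^ 2 / 2)) := exp_le_exp.2 (neg_le_neg hH)

lemma sq_sub_le_mul_sq_sqrt_sub {p p' b : ℝ} (hp₀ : 0 ≤ p) (hpb : p ≤ b)
    (hp'₀ : 0 ≤ p') (hp'b : p' ≤ b) :
    (p - p') ^ 2 ≤ 4 * b * (√p - √p') ^ 2 := by
  have hsum : (√p + √p') ^ 2 ≤ 4 * b := by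
    nlinarith [sq_sqrt hp₀, sq_sqrt hp'₀, sq_nonneg (√p - √p')]
  calc (p - p') ^ 2 = (√p + √p') ^ 2 * (√p - √p') ^ 2 := by
        rw [← mul_pow]; congr 1; nlinarith [sq_sqrt hp₀, sq_sqrt hp'₀]
    _ ≤ 4 * b * (√p - √p') ^ 2 := mul_le_mul_of_nonneg_right hsum (sq_nonneg _)

lemma exp_neg_mul_sub_le_exp_neg_sub_exp_neg {x y a : ℝ} (hxy : x ≤ y) (hya : y ≤ a) :
    exp (-a) * (y - x) ≤ exp (-x) - exp (-y) := by
  have hslope : exp (-y) * (y - x) ≤ exp (-x) - exp (-y) := by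
    have := mul_le_mul_of_nonneg_left (add_one_le_exp (y - x)) (exp_nonneg (-y))
    rw [← exp_add, show -y + (y - x) = -x by ring] at this
    linarith
  exact (mul_le_mul_of_nonneg_right (exp_le_exp.2 (neg_le_neg hya)) (by linarith)).trans hslope

lemma exp_neg_two_mul_mul_sq_sub_le {x y a : ℝ} (hxa : x ≤ a) (hya : y ≤ a) :
    exp (-(2 * a)) * (x - y) ^ 2 ≤ (exp (-x) - exp (-y)) ^ 2 := by
  have hexp : exp (-(2 * a)) = exp (-a) ^ 2 := by rw [← exp_nat_mul]; ring_nf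
  rw [hexp, ← mul_pow]
  have hea := exp_pos (-a)
  rcases le_total x y with hxy | hyx
  · have := exp_neg_mul_sub_le_exp_neg_sub_exp_neg hxy hya
    nlinarith [mul_nonneg hea.le (sub_nonneg.2 hxy)]
  · have := exp_neg_mul_sub_le_exp_neg_sub_exp_neg hyx hxa
    nlinarith [mul_nonneg hea.le (sub_nonneg.2 hyx)]

lemma bernoulliBhattacharyya_one_sub_exp_neg_le {x y b : ℝ} (hx₀ : 0 ≤ x) (hxb : x ≤ b)
    (hy₀ : 0 ≤ y) (hyb : y ≤ b) (hb : b ≤ 1 / 2) :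
    bernoulliBhattacharyya (1 - exp (-x)) (1 - exp (-y))
      ≤ exp (-(exp (-1) / (8 * b)) * (x - y) ^ 2) := by
  have hp : ∀ z, 0 ≤ z → z ≤ b → 0 ≤ 1 - exp (-z) ∧ 1 - exp (-z) ≤ 1 ∧ 1 - exp (-z) ≤ b :=
    fun z hz₀ hzb => ⟨by linarith [exp_le_one_iff.2 (neg_nonpos.2 hz₀)],
      by linarith [exp_pos (-z)], by linarith [add_one_le_exp (-z)]⟩
  obtain ⟨hp₀, hp₁, hpb⟩ := hp x hx₀ hxb
  obtain ⟨hp'₀, hp'₁, hp'b⟩ := hp y hy₀ hyb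
  refine (bernoulliBhattacharyya_le_exp hp₀ hp₁ hp'₀ hp'₁).trans (exp_le_exp.2 ?_)
  rw [neg_mul, neg_le_neg_iff, div_mul_eq_mul_div]
  refine div_le_of_le_mul₀ (by linarith) (by positivity) ?_
  calc exp (-1) * (x - y) ^ 2
      ≤ (exp (-x) - exp (-y)) ^ 2 := by
        simpa using exp_neg_two_mul_mul_sq_sub_le (hxb.trans hb) (hyb.trans hb)
    _ = (1 - exp (-x) - (1 - exp (-y))) ^ 2 := by ring
    _ ≤ 4 * b * (√(1 - exp (-x)) - √(1 - exp (-y))) ^ 2 :=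
        sq_sub_le_mul_sq_sqrt_sub hp₀ hpb hp'₀ hp'b
    _ = _ := by ring

theorem bhattacharyya_coefficient_bound_general
    (n m : ℕ) (lb c0 C0 : ℝ) (hlb : 0 < lb) (hc0 : 0 < c0)
    (hband : C0 * lb ≤ 1 / 2)
    (Λ Λ' : Fin n → Fin m → ℝ)
    (hΛ : ∀ i j, Λ i j ∈ Set.Icc (c0 * lb) (C0 * lb))
    (hΛ' : ∀ i j, Λ' i j ∈ Set.Icc (c0 * lb) (C0 * lb)) :
    ∏ i, ∏ j,
        (Real.sqrt ((1 - Real.exp (-Λ i j)) * (1 - Real.exp (-Λ' i j)))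
          + Real.sqrt ((1 - (1 - Real.exp (-Λ i j))) * (1 - (1 - Real.exp (-Λ' i j)))))
      ≤ Real.exp (-(Real.exp (-1) / (8 * C0 * lb)) * ∑ i, ∑ j, (Λ i j - Λ' i j) ^ 2) := by
  have hlow : 0 ≤ c0 * lb := by positivity
  have hterm : ∀ i j, bernoulliBhattacharyya (1 - exp (-Λ i j)) (1 - exp (-Λ' i j))
      ≤ exp (-(exp (-1) / (8 * C0 * lb)) * (Λ i j - Λ' i j) ^ 2) := fun i j => by
    rw [mul_assoc 8]
    exact bernoulliBhattacharyya_one_sub_exp_neg_le (hlow.trans (hΛ i j).1) (hΛ i j).2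
      (hlow.trans (hΛ' i j).1) (hΛ' i j).2 hband
  calc ∏ i, ∏ j, bernoulliBhattacharyya (1 - exp (-Λ i j)) (1 - exp (-Λ' i j))
      ≤ ∏ i, ∏ j, exp (-(exp (-1) / (8 * C0 * lb)) * (Λ i j - Λ' i j) ^ 2) :=
        prod_le_prod (fun i _ => prod_nonneg fun j _ => bernoulliBhattacharyya_nonneg _ _)
          fun i _ => prod_le_prod (fun j _ => bernoulliBhattacharyya_nonneg _ _)
            fun j _ => hterm i j
    _ = exp (-(exp (-1) / (8 * C0 * lb)) * ∑ i, ∑ j, (Λ i j - Λ' i j) ^ 2) := by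
        simp only [mul_sum, exp_sum]

/-- Exponential bound on the Bhattacharyya coefficient of banded product
Bernoulli measures under the Poisson intensity link. -/
theorem bhattacharyya_coefficient_bound
    (n m : ℕ) (lb c0 C0 : ℝ) (hlb : 0 < lb) (hc0 : 0 < c0) (hc0C0 : c0 ≤ C0)
    (hband : C0 * lb ≤ 1 / 2)
    (Λ Λ' : Fin n → Fin m → ℝ)
    (hΛ : ∀ i j, Λ i j ∈ Set.Icc (c0 * lb) (C0 * lb))
    (hΛ' : ∀ i j, Λ' i j ∈ Set.Icc (c0 * lb) (C0 * lb)) :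
    ∏ i, ∏ j,
        (Real.sqrt ((1 - Real.exp (-Λ i j)) * (1 - Real.exp (-Λ' i j)))
          + Real.sqrt ((1 - (1 - Real.exp (-Λ i j))) * (1 - (1 - Real.exp (-Λ' i j)))))
      ≤ Real.exp (-(Real.exp (-1) / (8 * C0 * lb)) * ∑ i, ∑ j, (Λ i j - Λ' i j) ^ 2) :=
  bhattacharyya_coefficient_bound_general n m lb c0 C0 hlb hc0 hband Λ Λ' hΛ hΛ'
end

section
/- Let n, m ∈ ℕ, λ̄ > 0, and 0 < c₀ ≤ C₀ with C₀·λ̄ ≤ 1/2. Let Λ* = (λ*_{ij}) and Λ = (λ_{ij}) be matrices in ℝ^{n×m} all of whose entries lie in [c₀λ̄, C₀λ̄], and set p*_{ij} = 1 − exp(−λ*_{ij}) and p_{ij} = 1 − exp(−λ_{ij}). Then Σ_{i,j} log( 1 + (p*_{ij} − p_{ij})² / ( p_{ij}·(1 − p_{ij}) ) ) ≤ (8 / (c₀·λ̄)) · Σ_{i,j} (λ*_{ij} − λ_{ij})². -/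
/-!
Each summand is controlled separately. Since `log (1 + t) ≤ t`, the Rényi term is at most the
chi-square divergence `(p* - p)² / (p (1 - p))`. Its numerator is at most `(λ* - λ)²` because
`t ↦ exp (-t)` is 1-Lipschitz on `[0, ∞)`, and its denominator `(1 - e^{-λ}) e^{-λ}` is at least
`λ / 4` as soon as `λ ≤ 1/2`, since then `e^{-λ} ≥ 1/2` and `1 - e^{-λ} ≥ λ e^{-λ} ≥ λ / 2`.
-/

open Real

noncomputable def bernoulliChiSq (p q : ℝ) : ℝ := (p - q) ^ 2 / (q * (1 - q))

lemma exp_neg_sub_exp_neg_le {x y : ℝ} (hx : 0 ≤ x) (hxy : x ≤ y) :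
    exp (-x) - exp (-y) ≤ y - x := by
  calc exp (-x) - exp (-y) = exp (-x) * (1 - exp (-(y - x))) := by
        rw [mul_sub, mul_one, ← exp_add]
        ring_nf
    _ ≤ 1 * (y - x) :=
      mul_le_mul (exp_le_one_iff.2 (by linarith)) (by linarith [one_sub_le_exp_neg (y - x)])
        (sub_nonneg.2 (exp_le_one_iff.2 (by linarith))) zero_le_one
    _ = y - x := one_mul _

lemma abs_exp_neg_sub_exp_neg_le {x y : ℝ} (hx : 0 ≤ x) (hy : 0 ≤ y) :
    |exp (-x) - exp (-y)| ≤ |x - y| := by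
  wlog hxy : x ≤ y generalizing x y
  · rw [abs_sub_comm, abs_sub_comm x]
    exact this hy hx (le_of_not_ge hxy)
  rw [abs_of_nonneg (sub_nonneg.2 (exp_le_exp.2 (neg_le_neg hxy))), abs_sub_comm,
    abs_of_nonneg (sub_nonneg.2 hxy)]
  exact exp_neg_sub_exp_neg_le hx hxy

lemma div_four_le_one_sub_exp_neg_mul_exp_neg {x : ℝ} (hx : 0 ≤ x) (hx_half : x ≤ 1 / 2) :
    x / 4 ≤ (1 - exp (-x)) * exp (-x) := by
  have hexp : 1 / 2 ≤ exp (-x) := by linarith [one_sub_le_exp_neg x]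
  have hmul : (x + 1) * exp (-x) ≤ 1 := by
    calc (x + 1) * exp (-x) ≤ exp x * exp (-x) := by gcongr; exact add_one_le_exp x
      _ = 1 := by rw [← exp_add, add_neg_cancel, exp_zero]
  have hone_sub : x / 2 ≤ 1 - exp (-x) := by
    nlinarith [mul_le_mul_of_nonneg_left hexp hx]
  calc x / 4 = x / 2 * (1 / 2) := by ring
    _ ≤ (1 - exp (-x)) * exp (-x) :=
      mul_le_mul hone_sub hexp (by norm_num) (by linarith)

lemma bernoulliChiSq_one_sub_exp_neg_le {a b : ℝ} (ha : 0 ≤ a) (hb : 0 < b) (hb_half : b ≤ 1 / 2) :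
    bernoulliChiSq (1 - exp (-a)) (1 - exp (-b)) ≤ 4 / b * (a - b) ^ 2 := by
  have hnum : ((1 - exp (-a)) - (1 - exp (-b))) ^ 2 ≤ (a - b) ^ 2 := by
    rw [sub_sub_sub_cancel_left, sq_le_sq, abs_sub_comm a]
    exact abs_exp_neg_sub_exp_neg_le hb.le ha
  have hden : b / 4 ≤ (1 - exp (-b)) * (1 - (1 - exp (-b))) := by
    rw [sub_sub_cancel]
    exact div_four_le_one_sub_exp_neg_mul_exp_neg hb.le hb_half
  calc bernoulliChiSq (1 - exp (-a)) (1 - exp (-b)) ≤ (a - b) ^ 2 / (b / 4) :=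
        div_le_div₀ (sq_nonneg _) hnum (by positivity) hden
    _ = 4 / b * (a - b) ^ 2 := by field_simp

lemma log_one_add_bernoulliChiSq_one_sub_exp_neg_le {a b : ℝ} (ha : 0 ≤ a) (hb : 0 < b)
    (hb_half : b ≤ 1 / 2) :
    log (1 + bernoulliChiSq (1 - exp (-a)) (1 - exp (-b))) ≤ 4 / b * (a - b) ^ 2 := by
  have hden : 0 < (1 - exp (-b)) * (1 - (1 - exp (-b))) := by
    rw [sub_sub_cancel]
    exact mul_pos (sub_pos.2 (exp_lt_one_iff.2 (by linarith))) (exp_pos _)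
  have hχ : 0 ≤ bernoulliChiSq (1 - exp (-a)) (1 - exp (-b)) :=
    div_nonneg (sq_nonneg _) hden.le
  have hlog := log_le_sub_one_of_pos (by linarith : 0 < 1 + bernoulliChiSq _ _)
  linarith [bernoulliChiSq_one_sub_exp_neg_le ha hb hb_half]

theorem renyi2_le_frobenius_general
    (n m : ℕ) (lb c0 C0 : ℝ) (hlb : 0 < lb) (hc0 : 0 < c0)
    (hband : C0 * lb ≤ 1 / 2)
    (Λs Λ : Fin n → Fin m → ℝ)
    (hΛs : ∀ i j, Λs i j ∈ Set.Icc (c0 * lb) (C0 * lb))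
    (hΛ : ∀ i j, Λ i j ∈ Set.Icc (c0 * lb) (C0 * lb)) :
    ∑ i, ∑ j,
        Real.log (1 + ((1 - Real.exp (-Λs i j)) - (1 - Real.exp (-Λ i j))) ^ 2
          / ((1 - Real.exp (-Λ i j)) * (1 - (1 - Real.exp (-Λ i j)))))
      ≤ (8 / (c0 * lb)) * ∑ i, ∑ j, (Λs i j - Λ i j) ^ 2 := by
  have hL : 0 < c0 * lb := mul_pos hc0 hlb
  rw [Finset.mul_sum]
  refine Finset.sum_le_sum fun i _ => ?_
  rw [Finset.mul_sum]
  refine Finset.sum_le_sum fun j _ => ?_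
  obtain ⟨hΛ_lo, hΛ_hi⟩ := hΛ i j
  calc log (1 + bernoulliChiSq (1 - exp (-Λs i j)) (1 - exp (-Λ i j)))
      ≤ 4 / Λ i j * (Λs i j - Λ i j) ^ 2 :=
        log_one_add_bernoulliChiSq_one_sub_exp_neg_le (hL.le.trans (hΛs i j).1)
          (hL.trans_le hΛ_lo) (hΛ_hi.trans hband)
    _ ≤ 8 / (c0 * lb) * (Λs i j - Λ i j) ^ 2 := by
        gcongr
        norm_num

/-- Frobenius upper bound for the order-2 Rényi divergence
(sum of log(1 + χ²) terms) of banded product Bernoulli measures under the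
Poisson intensity link. -/
theorem renyi2_le_frobenius
    (n m : ℕ) (lb c0 C0 : ℝ) (hlb : 0 < lb) (hc0 : 0 < c0) (hc0C0 : c0 ≤ C0)
    (hband : C0 * lb ≤ 1 / 2)
    (Λs Λ : Fin n → Fin m → ℝ)
    (hΛs : ∀ i j, Λs i j ∈ Set.Icc (c0 * lb) (C0 * lb))
    (hΛ : ∀ i j, Λ i j ∈ Set.Icc (c0 * lb) (C0 * lb)) :
    ∑ i, ∑ j,
        Real.log (1 + ((1 - Real.exp (-Λs i j)) - (1 - Real.exp (-Λ i j))) ^ 2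
          / ((1 - Real.exp (-Λ i j)) * (1 - (1 - Real.exp (-Λ i j)))))
      ≤ (8 / (c0 * lb)) * ∑ i, ∑ j, (Λs i j - Λ i j) ^ 2 :=
  renyi2_le_frobenius_general n m lb c0 C0 hlb hc0 hband Λs Λ hΛs hΛ
end
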